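/- Let φ denote the standard normal density on ℝ and let γ be the standard Gaussian measure on ℝ. Let (μ_n) and (σ_n) be real sequences with σ_n > 0, √n·μ_n → γ₁ and √n·(σ_n − 1) → γ₂ for real constants γ₁, γ₂. Then the functions x ↦ √n · ( φ((x − μ_n)/σ_n)/(σ_n · φ(x)) − 1 ) converge in L²(γ) to the function x ↦ γ₂(x² − 1) + γ₁ x. -/

import Mathlib

open MeasureTheory ProbabilityTheory Filter Real

/-- The standard normal density `φ(x) = (2π)^{-1/2} e^{-x²/2}`. -/
noncomputable def stdNormalPDF (x : ℝ) : ℝ :=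
  (Real.sqrt (2 * π))⁻¹ * Real.exp (-x ^ 2 / 2)

/-!
Writing `tₙ = √n`, the log-likelihood ratio `log (φ((x - μₙ)/σₙ) / φ(x))` times `tₙ` is a
quadratic `Qₙ(x)` whose coefficients converge (to `γ₂`, `γ₁`, `0`), and the score equals
`(tₙ (exp (Qₙ/tₙ) - 1) - tₙ(σₙ - 1)) / σₙ`. A first-order expansion of `exp` gives pointwise
convergence to `γ₂(x² - 1) + γ₁ x`. For domination, `|eᵘ - 1| ≤ |u| e^{|u|}` and
`|Qₙ(x)| ≤ M (1 + x²)` bound the score by `C e^{x²/8}` once `tₙ ≥ 16 M`, and `e^{x²/8}` is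
square integrable against `e^{-x²/2}`; dominated convergence in `L²(γ)` concludes.
-/

open scoped ENNReal Topology

lemma le_mul_exp_div {c : ℝ} (hc : 0 < c) (y : ℝ) : y ≤ c * exp (y / c) := by
  have h := add_one_le_exp (y / c)
  rw [← div_le_iff₀' hc]
  linarith

lemma abs_exp_sub_one_le_mul_exp_abs (u : ℝ) : |exp u - 1| ≤ |u| * exp |u| := by
  rcases le_total 0 u with hu | hu
  · have h := mul_le_mul_of_nonneg_right (add_one_le_exp (-u)) (exp_pos u).le
    rw [← exp_add, neg_add_cancel, exp_zero] at h
    rw [abs_of_nonneg hu, abs_of_nonneg (sub_nonneg.2 (one_le_exp hu))]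
    linarith
  · have h1 := add_one_le_exp u
    have h2 : 1 ≤ exp (-u) := one_le_exp (neg_nonneg.2 hu)
    rw [abs_of_nonpos hu, abs_of_nonpos (sub_nonpos.2 (exp_le_one_iff.2 hu))]
    nlinarith

lemma abs_mul_exp_div_sub_one_le (t y : ℝ) : |t * (exp (y / t) - 1)| ≤ |y| * exp |y / t| := by
  rcases eq_or_ne t 0 with rfl | ht
  · simp
  calc |t * (exp (y / t) - 1)| ≤ |t| * (|y / t| * exp |y / t|) := by
        rw [abs_mul]; gcongr; exact abs_exp_sub_one_le_mul_exp_abs _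
    _ = |y| * exp |y / t| := by rw [abs_div, ← mul_assoc, mul_div_cancel₀ _ (abs_ne_zero.2 ht)]

lemma abs_mul_exp_div_sub_one_le_of_abs_le {t Q M y : ℝ} (hM : 0 ≤ M) (ht : 16 * M ≤ t)
    (hy : 0 ≤ y) (hQ : |Q| ≤ M * y) : |t * (exp (Q / t) - 1)| ≤ 16 * M * exp (y / 8) := by
  have hQt : |Q / t| ≤ y / 16 := by
    rw [abs_div, abs_of_nonneg (by linarith : 0 ≤ t)]
    exact div_le_of_le_mul₀ (by linarith) (by positivity) (by nlinarith)
  calc |t * (exp (Q / t) - 1)| ≤ M * y * exp (y / 16) :=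
        (abs_mul_exp_div_sub_one_le t Q).trans (by gcongr)
    _ ≤ M * (16 * exp (y / 16)) * exp (y / 16) := by gcongr; exact le_mul_exp_div (by norm_num) y
    _ = 16 * M * exp (y / 8) := by rw [show y / 8 = y / 16 + y / 16 by ring, exp_add]; ring

lemma tendsto_mul_exp_div_sub_one {ι : Type*} {l : Filter ι} {t y : ι → ℝ} {c : ℝ}
    (ht : Tendsto t l atTop) (hy : Tendsto y l (𝓝 c)) :
    Tendsto (fun n => t n * (exp (y n / t n) - 1)) l (𝓝 c) := by
  have hyt : Tendsto (fun n => y n / t n) l (𝓝 0) := hy.div_atTop ht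
  have herr : Tendsto (fun n => t n * (exp (y n / t n) - 1) - y n) l (𝓝 0) := by
    refine squeeze_zero_norm' ?_ ((hy.pow 2).div_atTop ht)
    filter_upwards [hyt.abs.eventually (ge_mem_nhds (by simp : |(0 : ℝ)| < 1)),
      ht.eventually_gt_atTop 0] with n hsmall hpos
    calc ‖t n * (exp (y n / t n) - 1) - y n‖ = t n * |exp (y n / t n) - 1 - y n / t n| := by
          rw [Real.norm_eq_abs, ← abs_of_pos hpos, ← abs_mul, abs_of_pos hpos]
          congr 1; field_simp
      _ ≤ t n * (y n / t n) ^ 2 := by gcongr; exact abs_exp_sub_one_sub_id_le hsmall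
      _ = y n ^ 2 / t n := by field_simp
  simpa using herr.add hy

lemma abs_sub_div_sub_le {u b s ℓ : ℝ} (hs : 1 / 2 ≤ s) :
    |(u - b) / s - ℓ| ≤ 2 * (|u| + |b|) + |ℓ| := by
  have hdiv : |(u - b) / s| ≤ 2 * |u - b| := by
    rw [abs_div, abs_of_pos (by linarith : 0 < s), div_le_iff₀ (by linarith)]
    nlinarith [abs_nonneg (u - b)]
  have := abs_sub ((u - b) / s) ℓ
  linarith [abs_sub u b]

lemma abs_quadratic_le (p q r x : ℝ) :
    |p * x ^ 2 + q * x + r| ≤ (|p| + |q| + |r|) * (x ^ 2 + 1) := by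
  have hx : |x| ≤ x ^ 2 + 1 := by nlinarith [sq_abs x, sq_nonneg (|x| - 1)]
  calc |p * x ^ 2 + q * x + r| ≤ |p| * x ^ 2 + |q| * |x| + |r| := by
        refine (abs_add_three _ _ _).trans_eq ?_
        rw [abs_mul, abs_mul, abs_of_nonneg (sq_nonneg x)]
    _ ≤ (|p| + |q| + |r|) * (x ^ 2 + 1) := by
        nlinarith [abs_nonneg p, abs_nonneg q, abs_nonneg r, sq_nonneg x,
          mul_le_mul_of_nonneg_left hx (abs_nonneg q)]

lemma exists_eventually_abs_quadratic_le {ι : Type*} {l : Filter ι} {p q r : ι → ℝ}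
    {p₀ q₀ r₀ : ℝ} (hp : Tendsto p l (𝓝 p₀)) (hq : Tendsto q l (𝓝 q₀))
    (hr : Tendsto r l (𝓝 r₀)) :
    ∃ M, ∀ᶠ n in l, ∀ x : ℝ, |p n * x ^ 2 + q n * x + r n| ≤ M * (x ^ 2 + 1) := by
  refine ⟨|p₀| + |q₀| + |r₀| + 1, ?_⟩
  have hsum := (hp.abs.add hq.abs).add hr.abs
  filter_upwards [hsum.eventually (gt_mem_nhds (lt_add_one _))] with n hn x
  exact (abs_quadratic_le _ _ _ x).trans (by gcongr)

lemma tendsto_zero_of_tendsto_mul_of_tendsto_atTop {ι : Type*} {l : Filter ι} {t v : ι → ℝ}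
    {c : ℝ} (ht : Tendsto t l atTop) (h : Tendsto (fun n => t n * v n) l (𝓝 c)) :
    Tendsto v l (𝓝 0) :=
  (h.div_atTop ht).congr' <| (ht.eventually_ne_atTop 0).mono fun _ hn => mul_div_cancel_left₀ _ hn

lemma tendsto_eLpNorm_of_dominated {α E ι : Type*} [MeasurableSpace α] {μ : Measure α}
    [NormedAddCommGroup E] {l : Filter ι} [l.IsCountablyGenerated] {p : ℝ≥0∞}
    (hp0 : p ≠ 0) (hp : p ≠ ∞) {F : ι → α → E} {g : α → ℝ} (hg : MemLp g p μ)
    (hF : ∀ᶠ n in l, AEStronglyMeasurable (F n) μ)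
    (h_bound : ∀ᶠ n in l, ∀ᵐ x ∂μ, ‖F n x‖ ≤ g x)
    (h_lim : ∀ᵐ x ∂μ, Tendsto (fun n => F n x) l (𝓝 0)) :
    Tendsto (fun n => eLpNorm (F n) p μ) l (𝓝 0) := by
  have hp_pos : 0 < p.toReal := ENNReal.toReal_pos hp0 hp
  have hlint : Tendsto (fun n => ∫⁻ x, ‖F n x‖ₑ ^ p.toReal ∂μ) l (𝓝 0) := by
    have h_bound' : ∀ᶠ n in l, ∀ᵐ x ∂μ, ‖F n x‖ₑ ^ p.toReal ≤ ‖g x‖ₑ ^ p.toReal :=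
      h_bound.mono fun n hn => hn.mono fun x hx => ENNReal.rpow_le_rpow
        (enorm_le_iff_norm_le.2 (hx.trans (Real.le_norm_self _))) hp_pos.le
    have h_lim' : ∀ᵐ x ∂μ, Tendsto (fun n => ‖F n x‖ₑ ^ p.toReal) l (𝓝 0) :=
      h_lim.mono fun x hx => by
        have := ((ENNReal.continuous_rpow_const (y := p.toReal)).tendsto 0).comp
          (enorm_zero (E := E) ▸ hx.enorm)
        rwa [ENNReal.zero_rpow_of_pos hp_pos] at this
    simpa using tendsto_lintegral_filter_of_dominated_convergence' _
      (hF.mono fun n hn => hn.enorm.pow_const _) h_bound'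
      (lintegral_rpow_enorm_lt_top_of_eLpNorm_lt_top hp0 hp hg.2).ne h_lim'
  simp_rw [eLpNorm_eq_lintegral_rpow_enorm_toReal hp0 hp]
  have := ((ENNReal.continuous_rpow_const (y := 1 / p.toReal)).tendsto 0).comp hlint
  rwa [ENNReal.zero_rpow_of_pos (one_div_pos.2 hp_pos)] at this

lemma memLp_two_exp_mul_sq_gaussianReal {c : ℝ} (hc : c < 1 / 4) :
    MemLp (fun x => exp (c * x ^ 2)) 2 (gaussianReal 0 1) := by
  refine (memLp_two_iff_integrable_sq (by fun_prop : Measurable _).aestronglyMeasurable).2 ?_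
  rw [gaussianReal_of_var_ne_zero _ one_ne_zero, integrable_withDensity_iff_integrable_smul'
    (measurable_gaussianPDF _ _) (ae_of_all _ fun _ => gaussianPDF_lt_top)]
  refine ((integrable_exp_neg_mul_sq (by linarith : 0 < 1 / 2 - 2 * c)).const_mul
    (√(2 * π))⁻¹).congr (ae_of_all _ fun x => ?_)
  simp only [toReal_gaussianPDF, gaussianPDFReal, smul_eq_mul]
  rw [← exp_nat_mul, mul_assoc, ← exp_add]
  push_cast
  ring_nf

@[fun_prop]
lemma continuous_stdNormalPDF : Continuous stdNormalPDF := by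
  unfold stdNormalPDF; fun_prop

lemma stdNormalPDF_div_mul_stdNormalPDF (m x : ℝ) {s : ℝ} (hs : s ≠ 0) :
    stdNormalPDF ((x - m) / s) / (s * stdNormalPDF x) =
      exp ((x ^ 2 - ((x - m) / s) ^ 2) / 2) / s := by
  rw [show (x ^ 2 - ((x - m) / s) ^ 2) / 2 = -((x - m) / s) ^ 2 / 2 - -x ^ 2 / 2 by ring,
    exp_sub, stdNormalPDF, stdNormalPDF]
  have hc : √(2 * π) ≠ 0 := by positivity
  field_simp

/-- `t` times the log-likelihood ratio `(x² - ((x - m) / s)²) / 2` of `N(m, s²)` against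
`N(0, 1)`, expanded in powers of `x` with coefficients in `t * m` and `t * (s - 1)`. -/
noncomputable def scaledLogLR (t m s x : ℝ) : ℝ :=
  t * (s - 1) * (s + 1) / (2 * s ^ 2) * x ^ 2 + t * m / s ^ 2 * x + -(t * m * m / (2 * s ^ 2))

lemma mul_stdNormalPDF_ratio_sub_one {t s : ℝ} (m x : ℝ) (ht : t ≠ 0) (hs : s ≠ 0) :
    t * (stdNormalPDF ((x - m) / s) / (s * stdNormalPDF x) - 1) =
      (t * (exp (scaledLogLR t m s x / t) - 1) - t * (s - 1)) / s := by
  have hQ : scaledLogLR t m s x / t = (x ^ 2 - ((x - m) / s) ^ 2) / 2 := by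
    rw [scaledLogLR]; field_simp; ring
  rw [stdNormalPDF_div_mul_stdNormalPDF m x hs, hQ]
  field_simp
  ring

section LocationScale

variable {ι : Type*} {l : Filter ι} {t μ σ : ι → ℝ} {γ₁ γ₂ : ℝ}

lemma tendsto_scaledLogLR_coeffs (ht : Tendsto t l atTop)
    (hμ : Tendsto (fun n => t n * μ n) l (𝓝 γ₁))
    (hσ : Tendsto (fun n => t n * (σ n - 1)) l (𝓝 γ₂)) :
    Tendsto σ l (𝓝 1) ∧
      Tendsto (fun n => t n * (σ n - 1) * (σ n + 1) / (2 * σ n ^ 2)) l (𝓝 γ₂) ∧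
      Tendsto (fun n => t n * μ n / σ n ^ 2) l (𝓝 γ₁) ∧
      Tendsto (fun n => -(t n * μ n * μ n / (2 * σ n ^ 2))) l (𝓝 0) := by
  have hσ1 : Tendsto σ l (𝓝 1) := by
    simpa using (tendsto_zero_of_tendsto_mul_of_tendsto_atTop ht hσ).add_const 1
  have hμ0 := tendsto_zero_of_tendsto_mul_of_tendsto_atTop ht hμ
  refine ⟨hσ1, ?_, ?_, ?_⟩
  · have h := (hσ.mul (hσ1.add_const 1)).div
      ((tendsto_const_nhds (x := (2 : ℝ))).mul (hσ1.pow 2)) (by norm_num)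
    rwa [show γ₂ * (1 + 1) / (2 * 1 ^ 2) = γ₂ by ring] at h
  · have h := hμ.div (hσ1.pow 2) (by norm_num)
    rwa [one_pow, div_one] at h
  · have h := ((hμ.mul hμ0).div ((tendsto_const_nhds (x := (2 : ℝ))).mul (hσ1.pow 2))
      (by norm_num)).neg
    rwa [mul_zero, zero_div, neg_zero] at h

lemma tendsto_mul_stdNormalPDF_ratio_sub_one (ht : Tendsto t l atTop)
    (hμ : Tendsto (fun n => t n * μ n) l (𝓝 γ₁))
    (hσ : Tendsto (fun n => t n * (σ n - 1)) l (𝓝 γ₂)) (x : ℝ) :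
    Tendsto (fun n => t n * (stdNormalPDF ((x - μ n) / σ n) / (σ n * stdNormalPDF x) - 1)) l
      (𝓝 (γ₂ * (x ^ 2 - 1) + γ₁ * x)) := by
  obtain ⟨hσ1, hp, hq, hr⟩ := tendsto_scaledLogLR_coeffs ht hμ hσ
  have hQ : Tendsto (fun n => scaledLogLR (t n) (μ n) (σ n) x) l
      (𝓝 (γ₂ * x ^ 2 + γ₁ * x + 0)) :=
    ((hp.mul_const _).add (hq.mul_const _)).add hr
  have hlim := ((tendsto_mul_exp_div_sub_one ht hQ).sub hσ).div hσ1 one_ne_zero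
  rw [show γ₂ * (x ^ 2 - 1) + γ₁ * x = (γ₂ * x ^ 2 + γ₁ * x + 0 - γ₂) / 1 by ring]
  refine hlim.congr' ?_
  filter_upwards [ht.eventually_ne_atTop 0, hσ1.eventually_ne one_ne_zero] with n ht0 hσ0
  exact (mul_stdNormalPDF_ratio_sub_one _ x ht0 hσ0).symm

lemma exists_eventually_abs_mul_stdNormalPDF_ratio_sub_one_sub_le (ht : Tendsto t l atTop)
    (hμ : Tendsto (fun n => t n * μ n) l (𝓝 γ₁))
    (hσ : Tendsto (fun n => t n * (σ n - 1)) l (𝓝 γ₂)) :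
    ∃ C, ∀ᶠ n in l, ∀ x : ℝ,
      |t n * (stdNormalPDF ((x - μ n) / σ n) / (σ n * stdNormalPDF x) - 1) -
        (γ₂ * (x ^ 2 - 1) + γ₁ * x)| ≤ C * exp (1 / 8 * x ^ 2) := by
  obtain ⟨hσ1, hp, hq, hr⟩ := tendsto_scaledLogLR_coeffs ht hμ hσ
  obtain ⟨M₀, hM₀⟩ := exists_eventually_abs_quadratic_le hp hq hr
  set M := max M₀ (max (|γ₂| + |γ₁| + |-γ₂|) (|γ₂| + 1))
  have hM : 0 ≤ M := le_max_of_le_right (le_max_of_le_right (by positivity))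
  refine ⟨42 * M * exp (1 / 8), ?_⟩
  filter_upwards [hM₀, ht.eventually_ge_atTop (16 * M), ht.eventually_ne_atTop 0,
    hσ1.eventually (Ici_mem_nhds (by norm_num : (1 / 2 : ℝ) < 1)),
    hσ.abs.eventually (gt_mem_nhds (lt_add_one |γ₂|))] with n hQ htM ht0 hσn hb x
  have he_eq : exp ((x ^ 2 + 1) / 8) = exp (1 / 8) * exp (1 / 8 * x ^ 2) := by
    rw [← exp_add]; ring_nf
  set e := exp ((x ^ 2 + 1) / 8)
  have he : 1 ≤ e := one_le_exp (by positivity)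
  have hU : |t n * (exp (scaledLogLR (t n) (μ n) (σ n) x / t n) - 1)| ≤ 16 * M * e :=
    abs_mul_exp_div_sub_one_le_of_abs_le hM htM (by positivity)
      ((hQ x).trans (by gcongr; exact le_max_left _ _))
  have hb' : |t n * (σ n - 1)| ≤ M * e :=
    (hb.le.trans (le_max_of_le_right (le_max_right _ _))).trans (le_mul_of_one_le_right hM he)
  have hℓ : |γ₂ * (x ^ 2 - 1) + γ₁ * x| ≤ M * (8 * e) := by
    rw [show γ₂ * (x ^ 2 - 1) + γ₁ * x = γ₂ * x ^ 2 + γ₁ * x + -γ₂ by ring]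
    refine (abs_quadratic_le γ₂ γ₁ (-γ₂) x).trans ?_
    gcongr
    · exact le_max_of_le_right (le_max_left _ _)
    · exact le_mul_exp_div (by norm_num) _
  have hσ0 : σ n ≠ 0 := ((by norm_num : (0 : ℝ) < 1 / 2).trans_le hσn).ne'
  rw [mul_stdNormalPDF_ratio_sub_one _ x ht0 hσ0]
  calc _ ≤ 2 * (16 * M * e + M * e) + M * (8 * e) :=
        (abs_sub_div_sub_le hσn).trans (by linarith)
    _ = 42 * M * exp (1 / 8) * exp (1 / 8 * x ^ 2) := by rw [he_eq]; ring

end LocationScale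

theorem normal_score_L2_limit_general
    (μ σ : ℕ → ℝ) (γ₁ γ₂ : ℝ)
    (hμ : Tendsto (fun n : ℕ => Real.sqrt n * μ n) atTop (nhds γ₁))
    (hσ' : Tendsto (fun n : ℕ => Real.sqrt n * (σ n - 1)) atTop (nhds γ₂)) :
    Tendsto
      (fun n : ℕ =>
        eLpNorm
          (fun x =>
            Real.sqrt n * (stdNormalPDF ((x - μ n) / σ n) / (σ n * stdNormalPDF x) - 1) -
              (γ₂ * (x ^ 2 - 1) + γ₁ * x))
          2 (gaussianReal 0 1))
      atTop (nhds 0) := by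
  have ht : Tendsto (fun n : ℕ => √(n : ℝ)) atTop atTop :=
    tendsto_sqrt_atTop.comp tendsto_natCast_atTop_atTop
  obtain ⟨C, hC⟩ := exists_eventually_abs_mul_stdNormalPDF_ratio_sub_one_sub_le ht hμ hσ'
  refine tendsto_eLpNorm_of_dominated two_ne_zero ENNReal.ofNat_ne_top
    ((memLp_two_exp_mul_sq_gaussianReal (by norm_num)).const_mul C)
    (Eventually.of_forall fun _ => (by fun_prop : Measurable _).aestronglyMeasurable)
    (hC.mono fun _ hn => ae_of_all _ hn)
    (ae_of_all _ fun x => tendsto_sub_nhds_zero_iff.2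
      (tendsto_mul_stdNormalPDF_ratio_sub_one ht hμ hσ' x))

/-- if `√n μ_n → γ₁` and `√n (σ_n - 1) → γ₂`, then
`x ↦ √n (φ((x-μ_n)/σ_n)/(σ_n φ(x)) - 1)` converges in `L²(γ)` (γ the standard Gaussian
measure) to `x ↦ γ₂(x² - 1) + γ₁ x`. -/
theorem normal_score_L2_limit
    (μ σ : ℕ → ℝ) (hσ : ∀ n, 0 < σ n) (γ₁ γ₂ : ℝ)
    (hμ : Tendsto (fun n : ℕ => Real.sqrt n * μ n) atTop (nhds γ₁))
    (hσ' : Tendsto (fun n : ℕ => Real.sqrt n * (σ n - 1)) atTop (nhds γ₂)) :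
    Tendsto
      (fun n : ℕ =>
        eLpNorm
          (fun x =>
            Real.sqrt n * (stdNormalPDF ((x - μ n) / σ n) / (σ n * stdNormalPDF x) - 1) -
              (γ₂ * (x ^ 2 - 1) + γ₁ * x))
          2 (gaussianReal 0 1))
      atTop (nhds 0) :=
  normal_score_L2_limit_general μ σ γ₁ γ₂ hμ hσ'
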